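/- Let p ≥ 1 and let G be an ordered graph with chromatic number at least k ≥ 2, where edges (u1,v1), (u2,v2) are conflicting if |(v1-u1) - (v2-u2)| ≥ p (their lengths differ by at least p). Then G contains ⌈(k-1)/p⌉ pairwise conflicting edges, i.e., ⌈(k-1)/p⌉ edges whose lengths pairwise differ by at least p. Moreover, for the complete graph on vertex set {1,...,k}, the maximum number of such pairwise conflicting edges is exactly ⌈(k-1)/p⌉. -/

import Mathlib

/-!
If the edges of an ordered graph take only `d` distinct lengths, colouring the vertices greedily
from left to right uses at most `d + 1` colours, since a vertex has at most one left neighbour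
at each length. So chromatic number at least `k` forces at least `k - 1` distinct lengths, and
among `n` integers one finds `⌈n / p⌉` that are pairwise at least `p` apart by repeatedly taking
the least one and discarding everything closer than `p` to it. Conversely, `n` integers in
`[1, k - 1]` that are pairwise at least `p` apart span at least `p (n - 1)`, which bounds the
number of pairwise conflicting edges of the complete graph on `{1, …, k}` by `⌈(k - 1) / p⌉`.
-/

open Finset

namespace SimpleGraph

variable {α : Type*} {G : SimpleGraph α}

lemma support_finite_of_edgeSet_finite (h : G.edgeSet.Finite) : G.support.Finite := by
  classical
  refine (h.biUnion fun e _ => e.toFinset.finite_toSet).subset fun v hv => ?_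
  obtain ⟨w, hvw⟩ := G.mem_support.mp hv
  exact Set.mem_biUnion (x := s(v, w)) hvw (by simp [Sym2.toFinset_mk_eq])

variable [LinearOrder α] {s : ℕ}

lemma exists_coloring_on_of_card_left_neighbors_le
    (h : ∀ v (W : Finset α), (∀ u ∈ W, u < v ∧ G.Adj u v) → #W ≤ s) (V : Finset α) :
    ∃ c : α → Fin (s + 1), ∀ u ∈ V, ∀ v ∈ V, G.Adj u v → c u ≠ c v := by
  classical
  induction V using Finset.induction_on_max with
  | empty => exact ⟨fun _ => 0, by simp⟩
  | insert a V hlt ih =>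
    obtain ⟨c, hc⟩ := ih
    set N := V.filter (G.Adj · a)
    have hN : #(N.image c) < #(univ : Finset (Fin (s + 1))) := by
      have := h a N fun u hu => by simp only [N, mem_filter] at hu; exact ⟨hlt u hu.1, hu.2⟩
      simpa using card_image_le.trans_lt (Nat.lt_succ_of_le this)
    obtain ⟨col, -, hcol⟩ := exists_mem_notMem_of_card_lt_card hN
    have hfresh :
        ∀ u ∈ V, G.Adj u a → Function.update c a col u ≠ Function.update c a col a := by
      intro u hu hua
      rw [Function.update_of_ne (hlt u hu).ne, Function.update_self]
      exact fun hcu => hcol (mem_image.mpr ⟨u, mem_filter.mpr ⟨hu, hua⟩, hcu⟩)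
    refine ⟨Function.update c a col, ?_⟩
    simp only [forall_mem_insert]
    refine ⟨⟨fun h => (G.loopless.irrefl a h).elim,
      fun v hv hav => (hfresh v hv hav.symm).symm⟩, fun u hu => ⟨hfresh u hu, fun v hv huv => ?_⟩⟩
    rw [Function.update_of_ne (hlt u hu).ne, Function.update_of_ne (hlt v hv).ne]
    exact hc u hu v hv huv

lemma colorable_of_card_left_neighbors_le (hG : G.support.Finite)
    (h : ∀ v (W : Finset α), (∀ u ∈ W, u < v ∧ G.Adj u v) → #W ≤ s) :
    G.Colorable (s + 1) := by
  obtain ⟨c, hc⟩ := exists_coloring_on_of_card_left_neighbors_le h hG.toFinset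
  exact ⟨Coloring.mk c fun {u v} huv => hc u (by simpa using huv.mem_support_left) v
    (by simpa using huv.mem_support_right) huv⟩

end SimpleGraph

namespace Int

variable {p : ℕ}

lemma exists_subset_card_eq_pairwise_le_abs_sub (hp : 0 < p) :
    ∀ (m : ℕ) (D : Finset ℤ), p * m < #D + p →
      ∃ T ⊆ D, #T = m ∧ (T : Set ℤ).Pairwise fun x y => (p : ℤ) ≤ |x - y|
  | 0, _, _ => ⟨∅, empty_subset _, rfl, by simp⟩
  | m + 1, D, hm => by
    have hD : D.Nonempty := card_pos.mp (by nlinarith)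
    set a := D.min' hD
    set D' := D.filter fun d => a + p ≤ d
    have hnear : #(D.filter fun d => ¬a + p ≤ d) ≤ p := by
      refine (card_le_card fun d hd => ?_).trans (by simp : #(Ico a (a + p)) ≤ p)
      simp only [mem_filter, not_le] at hd
      exact mem_Ico.mpr ⟨D.min'_le d hd.1, hd.2⟩
    have hcard : #D ≤ #D' + p := by
      rw [← card_filter_add_card_filter_not (s := D) (fun d => a + p ≤ d)]
      exact Nat.add_le_add_left hnear _
    obtain ⟨T, hTD', hT, hTsep⟩ :=
      exists_subset_card_eq_pairwise_le_abs_sub hp m D' (by nlinarith)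
    have hfar : ∀ x ∈ T, a + p ≤ x := fun x hx => (mem_filter.mp (hTD' hx)).2
    have haT : a ∉ T := fun ha => by have := hfar a ha; omega
    refine ⟨insert a T, insert_subset (D.min'_mem hD) (hTD'.trans (filter_subset _ _)),
      by rw [card_insert_of_notMem haT, hT], ?_⟩
    rw [coe_insert]
    refine hTsep.insert_of_notMem haT fun x hx => ?_
    have hxa : (p : ℤ) ≤ |x - a| :=
      (by linarith [hfar x hx] : (p : ℤ) ≤ x - a).trans (le_abs_self _)
    exact ⟨abs_sub_comm x a ▸ hxa, hxa⟩

lemma exists_mem_add_mul_card_le_of_pairwise_le_abs_sub (a : ℤ) (T : Finset ℤ)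
    (hTa : ∀ x ∈ T, a ≤ x) (hsep : (T : Set ℤ).Pairwise fun x y => (p : ℤ) ≤ |x - y|)
    (hT : T.Nonempty) : ∃ x ∈ T, a + p * #T ≤ x + p := by
  induction T using Finset.induction_on_max with
  | empty => exact absurd hT (by simp)
  | insert c T hlt ih =>
    rw [card_insert_of_notMem fun hc => (hlt c hc).false]
    refine ⟨c, mem_insert_self c T, ?_⟩
    rcases T.eq_empty_or_nonempty with rfl | hne
    · simpa using hTa c (mem_insert_self c ∅)
    obtain ⟨x, hx, hax⟩ := ih (fun x hx => hTa x (mem_insert_of_mem hx))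
      (hsep.mono (by simp)) hne
    have hxc : (p : ℤ) ≤ c - x := by
      have : (p : ℤ) ≤ |x - c| := hsep (by simp [hx]) (by simp) (hlt x hx).ne
      rwa [abs_sub_comm, abs_of_pos (by linarith [hlt x hx])] at this
    push_cast
    linarith

end Int

theorem exists_pairwise_conflicting_edges {p k : ℕ} (hp : 0 < p) (G : SimpleGraph ℤ)
    (hG : G.edgeSet.Finite) (hχ : (k : ℕ∞) ≤ G.chromaticNumber) :
    ∃ S : Finset (ℤ × ℤ), #S = (k + p - 2) / p ∧ (∀ e ∈ S, e.1 < e.2 ∧ G.Adj e.1 e.2) ∧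
      ∀ e1 ∈ S, ∀ e2 ∈ S, e1 ≠ e2 → (p : ℤ) ≤ |(e1.2 - e1.1) - (e2.2 - e2.1)| := by
  classical
  have hsupp := G.support_finite_of_edgeSet_finite hG
  set edges := {e : ℤ × ℤ | e.1 < e.2 ∧ G.Adj e.1 e.2}
  set E := (hsupp.toFinset ×ˢ hsupp.toFinset).filter (· ∈ edges)
  have hE : ∀ e, e ∈ E ↔ e ∈ edges := fun e => by
    simpa [E, edges] using fun _ h => ⟨h.mem_support_left, h.mem_support_right⟩
  set D := E.image fun e => e.2 - e.1
  have hcol : G.Colorable (#D + 1) :=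
    G.colorable_of_card_left_neighbors_le hsupp fun v W hW =>
      card_le_card_of_injOn (v - ·)
        (fun u hu => mem_image.mpr ⟨(u, v), (hE _).mpr (hW u hu), rfl⟩)
        fun u _ w _ h => by simpa using h
  have hk : k ≤ #D + 1 := by exact_mod_cast hχ.trans hcol.chromaticNumber_le
  obtain ⟨T, hTD, hT, hTsep⟩ :=
    Int.exists_subset_card_eq_pairwise_le_abs_sub hp ((k + p - 2) / p) D
      (by have := Nat.mul_div_le (k + p - 2) p; omega)
  obtain ⟨S, hSedges, hinj, hST⟩ :=
    exists_subset_injOn_image_eq_of_surjOn edges T fun d hd => by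
      obtain ⟨e, he, rfl⟩ := mem_image.mp (hTD hd)
      exact ⟨e, (hE e).mp he, rfl⟩
  refine ⟨S, by rw [← hT, ← hST, card_image_of_injOn hinj], fun e he => hSedges he,
    fun e1 he1 e2 he2 hne => hTsep ?_ ?_ (hinj.ne he1 he2 hne)⟩ <;>
  exact hST ▸ mem_coe.mpr (mem_image_of_mem _ ‹_›)

theorem card_pairwise_conflicting_edges_le {p k : ℕ} (hp : 0 < p)
    (S : Finset (ℤ × ℤ))
    (hS : ∀ e ∈ S, 1 ≤ e.1 ∧ e.1 < e.2 ∧ e.2 ≤ (k : ℤ))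
    (hconf : ∀ e1 ∈ S, ∀ e2 ∈ S, e1 ≠ e2 → (p : ℤ) ≤ |(e1.2 - e1.1) - (e2.2 - e2.1)|) :
    #S ≤ (k + p - 2) / p := by
  rcases S.eq_empty_or_nonempty with rfl | hne
  · simp
  have hinj : Set.InjOn (fun e : ℤ × ℤ => e.2 - e.1) S := fun e1 he1 e2 he2 h => by
    by_contra hne
    have := hconf e1 he1 e2 he2 hne
    simp only at h
    rw [h, sub_self, abs_zero] at this
    omega
  obtain ⟨x, hx, hle⟩ := Int.exists_mem_add_mul_card_le_of_pairwise_le_abs_sub 1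
    (S.image fun e => e.2 - e.1)
    (by simp only [mem_image]; rintro _ ⟨e, he, rfl⟩; linarith [hS e he])
    (fun _ hx _ hy hxy => by
      obtain ⟨e1, he1, rfl⟩ := mem_image.mp hx
      obtain ⟨e2, he2, rfl⟩ := mem_image.mp hy
      exact hconf e1 he1 e2 he2 fun h => hxy (h ▸ rfl))
    (hne.image _)
  obtain ⟨e, he, rfl⟩ := mem_image.mp hx
  rw [card_image_of_injOn hinj] at hle
  have := hS e he
  rw [Nat.le_div_iff_mul_le hp]
  have : (#S : ℤ) * p ≤ k + p - 2 := by linarith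
  omega

theorem stmt14_general (p k : ℕ) (hp : 1 ≤ p) :
    (∀ G : SimpleGraph ℤ, G.edgeSet.Finite → (k : ℕ∞) ≤ G.chromaticNumber →
      ∃ S : Finset (ℤ × ℤ), S.card = (k + p - 2) / p ∧
        (∀ e ∈ S, e.1 < e.2 ∧ G.Adj e.1 e.2) ∧
        ∀ e1 ∈ S, ∀ e2 ∈ S, e1 ≠ e2 →
          (p : ℤ) ≤ |(e1.2 - e1.1) - (e2.2 - e2.1)|) ∧
    (∀ S : Finset (ℤ × ℤ),
      (∀ e ∈ S, 1 ≤ e.1 ∧ e.1 < e.2 ∧ e.2 ≤ (k : ℤ)) →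
      (∀ e1 ∈ S, ∀ e2 ∈ S, e1 ≠ e2 →
        (p : ℤ) ≤ |(e1.2 - e1.1) - (e2.2 - e2.1)|) →
      S.card ≤ (k + p - 2) / p) :=
  ⟨fun G hG hχ => exists_pairwise_conflicting_edges hp G hG hχ,
    fun S hS hconf => card_pairwise_conflicting_edges_le hp S hS hconf⟩

/-- For `p ≥ 1`, `k ≥ 2`: any finite ordered graph with chromatic number at least `k`
contains `⌈(k-1)/p⌉` edges whose lengths pairwise differ by at least `p`; and for the
complete graph on `{1,…,k}` this is the maximum size of such a set. -/
theorem stmt14 (p k : ℕ) (hp : 1 ≤ p) (hk : 2 ≤ k) :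
    (∀ G : SimpleGraph ℤ, G.edgeSet.Finite → (k : ℕ∞) ≤ G.chromaticNumber →
      ∃ S : Finset (ℤ × ℤ), S.card = (k + p - 2) / p ∧
        (∀ e ∈ S, e.1 < e.2 ∧ G.Adj e.1 e.2) ∧
        ∀ e1 ∈ S, ∀ e2 ∈ S, e1 ≠ e2 →
          (p : ℤ) ≤ |(e1.2 - e1.1) - (e2.2 - e2.1)|) ∧
    (∀ S : Finset (ℤ × ℤ),
      (∀ e ∈ S, 1 ≤ e.1 ∧ e.1 < e.2 ∧ e.2 ≤ (k : ℤ)) →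
      (∀ e1 ∈ S, ∀ e2 ∈ S, e1 ≠ e2 →
        (p : ℤ) ≤ |(e1.2 - e1.1) - (e2.2 - e2.1)|) →
      S.card ≤ (k + p - 2) / p) :=
  stmt14_general p k hp
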